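/- Let λ ∈ ℂ with Re(λ) ≥ 2. Then the eigenvalue problem (1 - φ²) v' + φ φ' v = λ v, with φ(x) = e^{-|x|}, has no nonzero solution v ∈ L²(ℝ) (with (1-φ²)v' ∈ L²(ℝ)). -/

import Mathlib

open MeasureTheory Real Set Filter

/-- `φ(x) = e^{-|x|}`. -/
noncomputable def phi (x : ℝ) : ℝ := Real.exp (-|x|)

/-- `φ'(x) = -sgn(x) e^{-|x|}` (a.e. derivative). -/
noncomputable def phi' (x : ℝ) : ℝ := -Real.sign x * Real.exp (-|x|)

/-!
Multiplying the equation by `v̄` and taking real parts shows that the weighted energy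
`F = (1 - φ²)|v|²` satisfies `F' = 2(Re λ - 2φφ')|v|² ≥ 0` off the origin, because `φφ' ≤ 1`.
So `F` is nondecreasing on each half-line. If `v ξ ≠ 0` with `ξ > 0`, then `|v|² ≥ F ≥ F ξ > 0`
on `[ξ, ∞)`; if `ξ < 0`, then `|v x|² ≥ F ξ / (2|x|)` on `(ξ, 0)` since `1 - φ² ≤ 2|x|`.
Either way `|v|²` is not integrable.
-/

theorem phi_pos (x : ℝ) : 0 < phi x := exp_pos _

theorem phi_le_one (x : ℝ) : phi x ≤ 1 := exp_le_one_iff.2 (neg_nonpos.2 (abs_nonneg x))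

theorem abs_phi'_le (x : ℝ) : |phi' x| ≤ phi x := by
  rw [phi', phi, abs_mul, abs_neg, abs_of_pos (exp_pos _)]
  refine mul_le_of_le_one_left (exp_pos _).le ?_
  rcases Real.sign_apply_eq x with h | h | h <;> simp [h]

theorem phi_mul_phi'_le_one (x : ℝ) : phi x * phi' x ≤ 1 := by
  nlinarith [phi_pos x, phi_le_one x, abs_phi'_le x, le_abs_self (phi' x)]

theorem one_sub_phi_sq_pos {x : ℝ} (hx : x ≠ 0) : 0 < 1 - phi x ^ 2 := by
  have : phi x < 1 := exp_lt_one_iff.2 (neg_neg_of_pos (abs_pos.2 hx))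
  nlinarith [phi_pos x]

theorem one_sub_phi_sq_le_two_mul_abs (x : ℝ) : 1 - phi x ^ 2 ≤ 2 * |x| := by
  have : phi x ^ 2 = exp (-2 * |x|) := by rw [phi, ← exp_nat_mul]; ring_nf
  linarith [add_one_le_exp (-2 * |x|)]

theorem hasDerivAt_phi {x : ℝ} (hx : x ≠ 0) : HasDerivAt phi (phi' x) x := by
  have habs : HasDerivAt (|·|) (Real.sign x) x := by
    rcases hx.lt_or_gt with h | h
    · simpa [Real.sign_of_neg h] using hasDerivAt_abs_neg h
    · simpa [Real.sign_of_pos h] using hasDerivAt_abs_pos h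
  refine ((hasDerivAt_exp (-|x|)).comp x habs.neg).congr_deriv ?_
  simp only [phi']
  ring

theorem hasDerivAt_one_sub_phi_sq {x : ℝ} (hx : x ≠ 0) :
    HasDerivAt (fun y => 1 - phi y ^ 2) (-(2 * (phi x * phi' x))) x := by
  refine (((hasDerivAt_phi hx).pow 2).const_sub 1).congr_deriv ?_
  norm_num
  ring

theorem HasDerivAt.mul_norm_sq_of_ode {a : ℝ → ℝ} {a' b x : ℝ} {v : ℝ → ℂ} {w lam : ℂ}
    (ha : HasDerivAt a a' x) (hv : HasDerivAt v w x)
    (hode : (a x : ℂ) * w + (b : ℂ) * v x = lam * v x) :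
    HasDerivAt (fun y => a y * ‖v y‖ ^ 2) ((a' + 2 * (lam.re - b)) * ‖v x‖ ^ 2) x := by
  have hinner : a x * Inner.inner ℝ (v x) w = (lam.re - b) * ‖v x‖ ^ 2 := by
    rw [← real_inner_smul_right, Complex.real_smul,
      show (a x : ℂ) * w = (lam - b) * v x by linear_combination hode, Complex.inner,
      mul_assoc, Complex.mul_conj, Complex.normSq_eq_norm_sq, Complex.re_mul_ofReal]
    simp
  refine (ha.mul hv.norm_sq).congr_deriv ?_
  linear_combination 2 * hinner

theorem monotoneOn_of_hasDerivAt_nonneg {D : Set ℝ} (hD : Convex ℝ D)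
    {f f' : ℝ → ℝ} (hf : ∀ x ∈ D, HasDerivAt f (f' x) x) (hf' : ∀ x ∈ D, 0 ≤ f' x) :
    MonotoneOn f D :=
  monotoneOn_of_hasDerivWithinAt_nonneg hD
    (fun x hx => (hf x hx).continuousAt.continuousWithinAt)
    (fun x hx => (hf x (interior_subset hx)).hasDerivWithinAt)
    (fun x hx => hf' x (interior_subset hx))

theorem nonpos_of_integrableOn_Ici_of_forall_le {g : ℝ → ℝ} {a C : ℝ}
    (hg : IntegrableOn g (Ici a)) (hC : ∀ x ∈ Ici a, C ≤ g x) : C ≤ 0 := by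
  by_contra! hpos
  have hconst : IntegrableOn (fun _ => C) (Ici a) :=
    hg.mono' aestronglyMeasurable_const <| ae_restrict_of_forall_mem measurableSet_Ici
      fun x hx => (Real.norm_of_nonneg hpos.le).trans_le (hC x hx)
  simp [integrableOn_const_iff, hpos.ne'] at hconst

theorem nonpos_of_integrableOn_Ioo_of_forall_le_abs_mul {g : ℝ → ℝ} {a C : ℝ} (ha : a < 0)
    (hg : IntegrableOn g (Ioo a 0)) (hC : ∀ x ∈ Ioo a 0, C ≤ |x| * g x) : C ≤ 0 := by
  by_contra! hpos
  have hinv : IntegrableOn (fun x : ℝ => x⁻¹) (Ioo a 0) :=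
    (hg.const_mul C⁻¹).mono' (by fun_prop) <| ae_restrict_of_forall_mem measurableSet_Ioo
      fun x hx => by
        have hx0 : 0 < |x| := abs_pos.2 hx.2.ne
        rw [norm_inv, Real.norm_eq_abs, le_inv_mul_iff₀ hpos, ← div_eq_mul_inv, div_le_iff₀ hx0,
          mul_comm]
        exact hC x hx
  have : IntervalIntegrable (fun x : ℝ => x⁻¹) volume a 0 := by
    rwa [intervalIntegrable_iff_integrableOn_Ioo_of_le ha.le]
  simp [ha.ne, ha.le] at this

theorem no_eigenvalue_re_ge_two_general
    (lam : ℂ) (hlam : 2 ≤ lam.re) (v dv : ℝ → ℂ)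
    (hderiv : ∀ ξ : ℝ, ξ ≠ 0 → HasDerivAt v (dv ξ) ξ)
    (heq : ∀ ξ : ℝ, ξ ≠ 0 →
      ((1 - phi ξ ^ 2 : ℝ) : ℂ) * dv ξ + ((phi ξ * phi' ξ : ℝ) : ℂ) * v ξ = lam * v ξ)
    (hv : MeasureTheory.MemLp v 2 (volume : Measure ℝ)) :
    ∀ ξ : ℝ, ξ ≠ 0 → v ξ = 0 := by
  set F : ℝ → ℝ := fun ξ => (1 - phi ξ ^ 2) * ‖v ξ‖ ^ 2
  have hF : ∀ ξ ≠ 0, HasDerivAt F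
      ((-(2 * (phi ξ * phi' ξ)) + 2 * (lam.re - phi ξ * phi' ξ)) * ‖v ξ‖ ^ 2) ξ :=
    fun ξ hξ => (hasDerivAt_one_sub_phi_sq hξ).mul_norm_sq_of_ode (hderiv ξ hξ) (heq ξ hξ)
  have hF_mono : ∀ D : Set ℝ, Convex ℝ D → D ⊆ {0}ᶜ → MonotoneOn F D := fun D hD h0 =>
    monotoneOn_of_hasDerivAt_nonneg hD (fun ξ hξ => hF ξ (h0 hξ)) fun ξ _ =>
      mul_nonneg (by linarith [phi_mul_phi'_le_one ξ]) (sq_nonneg _)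
  have hv2 : Integrable (fun ξ => ‖v ξ‖ ^ 2) := hv.integrable_norm_pow two_ne_zero
  intro ξ hξ
  suffices F ξ ≤ 0 by
    have := nonpos_of_mul_nonpos_right this (one_sub_phi_sq_pos hξ)
    exact norm_eq_zero.1 (pow_eq_zero_iff two_ne_zero |>.1 (le_antisymm this (sq_nonneg _)))
  rcases hξ.lt_or_gt with hneg | hpos
  · refine nonpos_of_integrableOn_Ioo_of_forall_le_abs_mul hneg (hv2.const_mul 2).integrableOn
      fun x hx => ?_
    calc F ξ ≤ F x := hF_mono (Iio 0) (convex_Iio 0) (by simp) hneg hx.2 hx.1.le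
      _ ≤ 2 * |x| * ‖v x‖ ^ 2 :=
        mul_le_mul_of_nonneg_right (one_sub_phi_sq_le_two_mul_abs x) (sq_nonneg _)
      _ = |x| * (2 * ‖v x‖ ^ 2) := by ring
  · refine nonpos_of_integrableOn_Ici_of_forall_le (a := ξ) hv2.integrableOn fun x hx => ?_
    calc F ξ ≤ F x := hF_mono (Ioi 0) (convex_Ioi 0) (by simp) hpos (hpos.trans_le hx) hx
      _ ≤ ‖v x‖ ^ 2 := mul_le_of_le_one_left (sq_nonneg _) (by nlinarith [phi_pos x])

/-- For `Re λ ≥ 2`, the eigenvalue problem `(1-φ²)v' + φφ'v = λ v` has no nonzero solution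
`v ∈ L²(ℝ)` with `(1-φ²)v' ∈ L²(ℝ)`. -/
theorem no_eigenvalue_re_ge_two
    (lam : ℂ) (hlam : 2 ≤ lam.re) (v dv : ℝ → ℂ)
    (hderiv : ∀ ξ : ℝ, ξ ≠ 0 → HasDerivAt v (dv ξ) ξ)
    (heq : ∀ ξ : ℝ, ξ ≠ 0 →
      ((1 - phi ξ ^ 2 : ℝ) : ℂ) * dv ξ + ((phi ξ * phi' ξ : ℝ) : ℂ) * v ξ = lam * v ξ)
    (hv : MeasureTheory.MemLp v 2 (volume : Measure ℝ))
    (hdv : MeasureTheory.MemLp (fun ξ => ((1 - phi ξ ^ 2 : ℝ) : ℂ) * dv ξ) 2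
      (volume : Measure ℝ)) :
    ∀ ξ : ℝ, ξ ≠ 0 → v ξ = 0 :=
  no_eigenvalue_re_ge_two_general lam hlam v dv hderiv heq hv
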